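/- Let T be a tree of order n ≥ 3 which is not NEB (nearly even branching) at a vertex v. Then no real skew-symmetric matrix A with graph T has the Duarte property with respect to v. -/

import Mathlib

open Polynomial Matrix Finset
open scoped Classical

noncomputable section

/-- The graph of a square real matrix: `i ~ j` iff `i ≠ j` and the `(i,j)` or
`(j,i)` entry is nonzero. -/
def graphOf {N : ℕ} (A : Matrix (Fin N) (Fin N) ℝ) : SimpleGraph (Fin N) :=
  SimpleGraph.fromRel (fun i j => A i j ≠ 0)

/-- The principal submatrix of `A` on the index set `S`. -/
def subOn {N : ℕ} (A : Matrix (Fin N) (Fin N) ℝ) (S : Finset (Fin N)) :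
    Matrix {x // x ∈ S} {x // x ∈ S} ℝ :=
  A.submatrix (fun x => x.1) (fun x => x.1)

/-- The vertex set of the connected component of `v` in the subgraph of `G`
induced on `S`. -/
def comp {N : ℕ} (G : SimpleGraph (Fin N)) (S : Finset (Fin N)) (v : Fin N) :
    Finset (Fin N) :=
  S.filter (fun u => ∃ w : G.Walk v u, ∀ x ∈ w.support, x ∈ S)

/-- The eigenvalues of the real skew-symmetric matrix `A` are `i·l 0, …`,
expressed via the characteristic polynomial over `ℂ`. -/
def specIm {m : Type} [Fintype m] [DecidableEq m] (A : Matrix m m ℝ)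
    (l : Fin (Fintype.card m) → ℝ) : Prop :=
  (A.map (Complex.ofReal : ℝ → ℂ)).charpoly = ∏ j, (X - C (Complex.I * (l j : ℂ)))

/-- The (purely imaginary) spectrum of `B` strictly interlaces that of `A`,
in the ordering `i·a ≤ i·b ↔ a ≤ b`. -/
def StrictInterlace {m m' : Type} [Fintype m] [DecidableEq m] [Fintype m'] [DecidableEq m']
    (A : Matrix m m ℝ) (B : Matrix m' m' ℝ) : Prop :=
  ∃ (h : Fintype.card m' + 1 = Fintype.card m) (l : Fin (Fintype.card m) → ℝ)
    (mu : Fin (Fintype.card m') → ℝ),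
    specIm A l ∧ specIm B mu ∧
      ∀ j : Fin (Fintype.card m'),
        l (Fin.cast h j.castSucc) < mu j ∧ mu j < l (Fin.cast h j.succ)

/-- Fuel-based recursion for the Duarte property of the principal submatrix of
`A` on `S` with respect to the vertex `w ∈ S`. -/
def DuarteAux {N : ℕ} (A : Matrix (Fin N) (Fin N) ℝ) :
    ℕ → Finset (Fin N) → Fin N → Prop
  | 0, S, w => S = {w}
  | (k + 1), S, w => S = {w} ∨
      (StrictInterlace (subOn A S) (subOn A (S.erase w)) ∧
        ∀ v ∈ S.erase w, (graphOf A).Adj w v →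
          DuarteAux A k (comp (graphOf A) (S.erase w) v) v)

/-- `A` has the Duarte property with respect to the vertex `w`. -/
def Duarte {N : ℕ} (A : Matrix (Fin N) (Fin N) ℝ) (w : Fin N) : Prop :=
  DuarteAux A N Finset.univ w

/-- Fuel-based recursion for the nearly even branching (NEB) property of the
subtree of `T` on `S` at the vertex `w ∈ S`. -/
def NEBAux {N : ℕ} (T : SimpleGraph (Fin N)) : ℕ → Finset (Fin N) → Fin N → Prop
  | 0, S, w => S = {w}
  | (k + 1), S, w => S = {w} ∨
      ((((S.erase w).filter
            (fun v => T.Adj w v ∧ Odd (comp T (S.erase w) v).card)).card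
          = if Even S.card then 1 else 0) ∧
        ∀ v ∈ S.erase w, T.Adj w v → NEBAux T k (comp T (S.erase w) v) v)

/-- The tree `T` is nearly even branching (NEB) at the vertex `w`. -/
def NEB {N : ℕ} (T : SimpleGraph (Fin N)) (w : Fin N) : Prop :=
  NEBAux T N Finset.univ w

/-! Strict interlacing makes the eigenvalues of `A(w)` simple, so `0` is at most a simple root
of its characteristic polynomial. Every component of `T - w` of odd order gives an odd-order
skew-symmetric diagonal block of `A(w)`, which is singular; two of them would make `0` a double
root. So `T - w` has at most one odd component, and the parity of `|T| - 1` fixes how many.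
Recursing into the components turns the Duarte property at `w` into NEB at `w`. -/

namespace Matrix

theorem toSquareBlock_transpose_eq_neg {m α R : Type*} [Neg R] {M : Matrix m m R} {b : m → α}
    (hM : Mᵀ = -M) (a : α) : (M.toSquareBlock b a)ᵀ = -M.toSquareBlock b a := by
  ext i j
  exact congrFun (congrFun hM i.1) j.1

variable {m R : Type*} [Fintype m] [DecidableEq m] [CommRing R] [NoZeroDivisors R] [CharZero R]
  {M : Matrix m m R}

theorem det_eq_zero_of_transpose_eq_neg (hM : Mᵀ = -M) (hodd : Odd (Fintype.card m)) :
    M.det = 0 := by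
  rw [← CharZero.eq_neg_self_iff]
  calc M.det = Mᵀ.det := M.det_transpose.symm
    _ = -M.det := by rw [hM, det_neg, hodd.neg_one_pow, neg_one_mul]

theorem X_dvd_charpoly_of_transpose_eq_neg (hM : Mᵀ = -M) (hodd : Odd (Fintype.card m)) :
    X ∣ M.charpoly := by
  have h := M.det_eq_sign_charpoly_coeff
  rw [det_eq_zero_of_transpose_eq_neg hM hodd, hodd.neg_one_pow] at h
  rw [X_dvd_iff]
  linear_combination h

theorem X_sq_dvd_charpoly_of_blockTriangular {α : Type*} [LinearOrder α] {b : m → α}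
    (hM : Mᵀ = -M) (hb : M.BlockTriangular b) {a₁ a₂ : α} (hne : a₁ ≠ a₂)
    (h₁ : Odd (Fintype.card {i // b i = a₁})) (h₂ : Odd (Fintype.card {i // b i = a₂})) :
    X ^ 2 ∣ M.charpoly := by
  have mem_image : ∀ a, Odd (Fintype.card {i // b i = a}) → a ∈ univ.image b := fun a ha =>
    have ⟨i, hi⟩ := Fintype.card_pos_iff.1 ha.pos
    mem_image.2 ⟨i, mem_univ _, hi⟩
  rw [hb.charpoly, ← prod_erase_mul _ _ (mem_image a₁ h₁),
    ← prod_erase_mul _ _ (mem_erase.2 ⟨hne.symm, mem_image a₂ h₂⟩), pow_two, mul_assoc]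
  exact dvd_mul_of_dvd_right (mul_dvd_mul
    (X_dvd_charpoly_of_transpose_eq_neg (toSquareBlock_transpose_eq_neg hM a₂) h₂)
    (X_dvd_charpoly_of_transpose_eq_neg (toSquareBlock_transpose_eq_neg hM a₁) h₁)) _

theorem X_sq_dvd_charpoly_of_transpose_eq_neg (hM : Mᵀ = -M) {s t : Finset m}
    (hst : Disjoint s t) (hs : ∀ i ∈ s, ∀ j ∉ s, M i j = 0) (ht : ∀ i ∈ t, ∀ j ∉ t, M i j = 0)
    (hs' : Odd s.card) (ht' : Odd t.card) : X ^ 2 ∣ M.charpoly := by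
  let b : m → ℕ := fun i => if i ∈ s then 0 else if i ∈ t then 1 else 2
  have hb : M.BlockTriangular b := by
    intro i j hji
    have hskew : M i j = -M j i := by simpa using congrFun (congrFun hM j) i
    by_cases his : i ∈ s
    · simp [b, his] at hji
    by_cases hit : i ∈ t
    · exact ht i hit j fun hjt => by simp [b, his, hit, hjt, disjoint_right.1 hst hjt] at hji
    by_cases hjs : j ∈ s
    · rw [hskew, hs j hjs i his, neg_zero]
    by_cases hjt : j ∈ t
    · rw [hskew, ht j hjt i hit, neg_zero]
    · simp [b, his, hit, hjs, hjt] at hji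
  have card_block : ∀ (a : ℕ) (u : Finset m), (∀ i, b i = a ↔ i ∈ u) →
      Fintype.card {i // b i = a} = u.card := fun a u hu => by
    rw [Fintype.card_subtype]
    exact congrArg card (Finset.ext fun i => by simp [hu])
  refine X_sq_dvd_charpoly_of_blockTriangular hM hb zero_ne_one (a₁ := 0) (a₂ := 1) ?_ ?_
  · rwa [card_block 0 s fun i => by by_cases i ∈ s <;> by_cases i ∈ t <;> simp_all [b]]
  · refine card_block 1 t (fun i => ?_) ▸ ht'
    by_cases his : i ∈ s
    · simp [b, his, disjoint_left.1 hst his]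
    · by_cases i ∈ t <;> simp_all [b]

end Matrix

theorem Polynomial.not_X_sq_dvd_prod_X_sub_C {K ι : Type*} [Field K] [Fintype ι] {f : ι → K}
    (hf : Function.Injective f) : ¬ X ^ 2 ∣ ∏ i, (X - C (f i)) := fun h =>
  not_isUnit_X ((separable_prod_X_sub_C_iff.2 hf).squarefree X (by rwa [← pow_two]))

section Components

variable {N : ℕ} {G : SimpleGraph (Fin N)} {S : Finset (Fin N)} {u v w : Fin N}

theorem mem_comp :
    u ∈ comp G S v ↔ u ∈ S ∧ ∃ p : G.Walk v u, ∀ x ∈ p.support, x ∈ S :=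
  mem_filter

theorem comp_subset : comp G S v ⊆ S := filter_subset _ _

theorem self_mem_comp (hv : v ∈ S) : v ∈ comp G S v :=
  mem_comp.2 ⟨hv, .nil, by simpa using hv⟩

theorem mem_comp_of_adj {x : Fin N} (hu : u ∈ comp G S v) (hadj : G.Adj u x) (hx : x ∈ S) :
    x ∈ comp G S v := by
  obtain ⟨-, p, hp⟩ := mem_comp.1 hu
  refine mem_comp.2 ⟨hx, p.concat hadj, fun y hy => ?_⟩
  rw [SimpleGraph.Walk.support_concat, List.mem_append, List.mem_singleton] at hy
  exact hy.elim (hp y) fun h => h ▸ hx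

theorem comp_comp_self : comp G (comp G S v) v = comp G S v := by
  refine subset_antisymm comp_subset fun u hu => ?_
  obtain ⟨hu, p, hp⟩ := mem_comp.1 hu
  refine mem_comp.2 ⟨mem_comp.2 ⟨hu, p, hp⟩, p, fun x hx =>
    mem_comp.2 ⟨hp x hx, p.takeUntil x hx,
      fun y hy => hp y (p.support_takeUntil_subset_support hx hy)⟩⟩

theorem SimpleGraph.IsTree.disjoint_comp (hT : G.IsTree) {v₁ v₂ : Fin N} (hw : w ∉ S)
    (h₁ : G.Adj w v₁) (h₂ : G.Adj w v₂) (hne : v₁ ≠ v₂) :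
    Disjoint (comp G S v₁) (comp G S v₂) := by
  refine Finset.disjoint_left.2 fun u hu₁ hu₂ => ?_
  obtain ⟨-, p₁, hp₁⟩ := mem_comp.1 hu₁
  obtain ⟨-, p₂, hp₂⟩ := mem_comp.1 hu₂
  let q := (p₁.append p₂.reverse).bypass
  have hq : ∀ x ∈ q.support, x ∈ S := fun x hx => by
    have := (p₁.append p₂.reverse).support_bypass_subset_support hx
    simp only [SimpleGraph.Walk.mem_support_append_iff, SimpleGraph.Walk.support_reverse,
      List.mem_reverse] at this
    exact this.elim (hp₁ x) (hp₂ x)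
  -- the path `v₁ - w - v₂` is the only path from `v₁` to `v₂`, but `q` avoids `w`
  let r : G.Walk v₁ v₂ := .cons h₁.symm (.cons h₂ .nil)
  have hr : r.IsPath := by simp [r, h₁.ne', hne, h₂.ne]
  have hqr : q = r := congrArg Subtype.val
    ((hT.isAcyclic.subsingleton_path v₁ v₂).elim ⟨q, (p₁.append p₂.reverse).bypass_isPath⟩ ⟨r, hr⟩)
  exact hw (hq w (hqr ▸ by simp [r]))

theorem erase_eq_biUnion_comp (hS : comp G S w = S) :
    S.erase w = ((S.erase w).filter (G.Adj w)).biUnion (comp G (S.erase w)) := by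
  refine subset_antisymm (fun u hu => ?_) (biUnion_subset.2 fun _ _ => comp_subset)
  obtain ⟨huw, huS⟩ := mem_erase.1 hu
  obtain ⟨-, p, hp⟩ := mem_comp.1 (hS.symm ▸ huS : u ∈ comp G S w)
  have hpath := p.bypass_isPath
  have hsub : ∀ x ∈ p.bypass.support, x ∈ S :=
    fun x hx => hp x (p.support_bypass_subset_support hx)
  generalize p.bypass = q at hpath hsub
  cases q with
  | nil => exact absurd rfl huw
  | @cons _ v _ hadj q =>
    rw [SimpleGraph.Walk.cons_isPath_iff] at hpath
    have hq : ∀ x ∈ q.support, x ∈ S.erase w := fun x hx =>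
      mem_erase.2 ⟨fun h => hpath.2 (h ▸ hx), hsub x (by simp [hx])⟩
    exact mem_biUnion.2 ⟨v, mem_filter.2 ⟨hq v q.start_mem_support, hadj⟩, mem_comp.2 ⟨hu, q, hq⟩⟩

theorem SimpleGraph.IsTree.odd_card_filter_odd_comp_iff (hT : G.IsTree) (hS : comp G S w = S) :
    Odd ((S.erase w).filter fun v => G.Adj w v ∧ Odd (comp G (S.erase w) v).card).card ↔
      Odd (S.erase w).card := by
  have hcard : (S.erase w).card =
      ∑ v ∈ (S.erase w).filter (G.Adj w), (comp G (S.erase w) v).card := by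
    conv_lhs => rw [erase_eq_biUnion_comp hS]
    refine card_biUnion fun v₁ h₁ v₂ h₂ hne => hT.disjoint_comp (notMem_erase w S)
      (mem_filter.1 h₁).2 (mem_filter.1 h₂).2 hne
  rw [hcard, odd_sum_iff_odd_card_odd, filter_filter]

end Components

theorem strictMono_of_interlace {α : Type*} [Preorder α] {n k : ℕ} (h : n + 1 = k)
    {l : Fin k → α} {μ : Fin n → α}
    (hl : ∀ j, l (Fin.cast h j.castSucc) < μ j ∧ μ j < l (Fin.cast h j.succ)) : StrictMono μ := by
  subst h
  simp only [Fin.cast_eq_self] at hl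
  have hlmono : StrictMono l := Fin.strictMono_iff_lt_succ.2 fun j => (hl j).1.trans (hl j).2
  intro a b hab
  calc μ a < l a.succ := (hl a).2
    _ ≤ l b.castSucc := hlmono.monotone (Fin.le_def.2 (by simpa using hab))
    _ < μ b := (hl b).1

theorem StrictInterlace.not_X_sq_dvd_charpoly {m m' : Type} [Fintype m] [DecidableEq m]
    [Fintype m'] [DecidableEq m'] {A : Matrix m m ℝ} {B : Matrix m' m' ℝ}
    (h : StrictInterlace A B) : ¬ X ^ 2 ∣ (B.map (Complex.ofReal : ℝ → ℂ)).charpoly := by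
  obtain ⟨hcard, l, μ, -, hB, hl⟩ := h
  rw [hB]
  refine not_X_sq_dvd_prod_X_sub_C fun i j hij => (strictMono_of_interlace hcard hl).injective ?_
  exact_mod_cast mul_left_cancel₀ Complex.I_ne_zero hij

section DuarteNEB

variable {N : ℕ} {A : Matrix (Fin N) (Fin N) ℝ}

theorem graphOf_eq_of_forall_ne_zero_iff {T : SimpleGraph (Fin N)}
    (h : ∀ i j, i ≠ j → (A i j ≠ 0 ↔ T.Adj i j)) : graphOf A = T := by
  ext i j
  simp only [graphOf, SimpleGraph.fromRel_adj]
  refine ⟨fun ⟨hne, hij⟩ => hij.elim (h i j hne).1 fun hji => ((h j i hne.symm).1 hji).symm,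
    fun hadj => ⟨hadj.ne, .inl ((h i j hadj.ne).2 hadj)⟩⟩

theorem eq_zero_of_mem_comp_graphOf {S : Finset (Fin N)} {i j v : Fin N}
    (hi : i ∈ comp (graphOf A) S v) (hj : j ∈ S) (hjv : j ∉ comp (graphOf A) S v) : A i j = 0 := by
  by_contra hij
  have hne : i ≠ j := fun h => hjv (h ▸ hi)
  exact hjv (mem_comp_of_adj hi (SimpleGraph.fromRel_adj _ _ _ |>.2 ⟨hne, .inl hij⟩) hj)

theorem X_sq_dvd_charpoly_subOn (hA : Aᵀ = -A) {U C₁ C₂ : Finset (Fin N)}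
    (h₁ : C₁ ⊆ U) (h₂ : C₂ ⊆ U) (hC : Disjoint C₁ C₂)
    (hC₁ : ∀ i ∈ C₁, ∀ j ∈ U, j ∉ C₁ → A i j = 0) (hC₂ : ∀ i ∈ C₂, ∀ j ∈ U, j ∉ C₂ → A i j = 0)
    (ho₁ : Odd C₁.card) (ho₂ : Odd C₂.card) :
    X ^ 2 ∣ ((subOn A U).map (Complex.ofReal : ℝ → ℂ)).charpoly := by
  have card_subtype_eq : ∀ C ⊆ U, (C.subtype (· ∈ U)).card = C.card := fun C hCU => by
    rw [card_subtype, filter_true_of_mem hCU]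
  refine Matrix.X_sq_dvd_charpoly_of_transpose_eq_neg (s := C₁.subtype (· ∈ U))
    (t := C₂.subtype (· ∈ U)) ?_ ?_ ?_ ?_ ?_ ?_
  · ext i j
    simp [subOn, show A j i = -A i j from congrFun (congrFun hA i) j]
  · exact Finset.disjoint_left.2 fun i hi₁ hi₂ =>
      Finset.disjoint_left.1 hC (mem_subtype.1 hi₁) (mem_subtype.1 hi₂)
  · intro i hi j hj
    simp [subOn, hC₁ i (mem_subtype.1 hi) j j.2 (by simpa using hj)]
  · intro i hi j hj
    simp [subOn, hC₂ i (mem_subtype.1 hi) j j.2 (by simpa using hj)]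
  · rwa [card_subtype_eq C₁ h₁]
  · rwa [card_subtype_eq C₂ h₂]

theorem card_filter_odd_comp_le_one (hA : Aᵀ = -A) (hT : (graphOf A).IsTree)
    {S : Finset (Fin N)} {w : Fin N} (hint : StrictInterlace (subOn A S) (subOn A (S.erase w))) :
    ((S.erase w).filter fun v =>
      (graphOf A).Adj w v ∧ Odd (comp (graphOf A) (S.erase w) v).card).card ≤ 1 := by
  by_contra! hlt
  obtain ⟨v₁, h₁, v₂, h₂, hne⟩ := one_lt_card.1 hlt
  rw [mem_filter] at h₁ h₂
  exact hint.not_X_sq_dvd_charpoly <| X_sq_dvd_charpoly_subOn hA comp_subset comp_subset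
    (hT.disjoint_comp (notMem_erase w S) h₁.2.1 h₂.2.1 hne)
    (fun _ hi _ => eq_zero_of_mem_comp_graphOf hi) (fun _ hi _ => eq_zero_of_mem_comp_graphOf hi)
    h₁.2.2 h₂.2.2

theorem card_filter_odd_comp_eq (hA : Aᵀ = -A) (hT : (graphOf A).IsTree)
    {S : Finset (Fin N)} {w : Fin N} (hw : w ∈ S) (hS : comp (graphOf A) S w = S)
    (hint : StrictInterlace (subOn A S) (subOn A (S.erase w))) :
    ((S.erase w).filter fun v =>
      (graphOf A).Adj w v ∧ Odd (comp (graphOf A) (S.erase w) v).card).card =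
        if Even S.card then 1 else 0 := by
  have hle := card_filter_odd_comp_le_one hA hT hint
  have hpar := hT.odd_card_filter_odd_comp_iff hS
  have hcard := card_erase_add_one hw
  rw [Nat.odd_iff, Nat.odd_iff] at hpar
  split_ifs with heven <;> rw [Nat.even_iff] at heven <;> omega

theorem nebAux_of_duarteAux (hA : Aᵀ = -A) (hT : (graphOf A).IsTree) :
    ∀ (k : ℕ) {S : Finset (Fin N)} {w : Fin N}, w ∈ S → comp (graphOf A) S w = S →
      DuarteAux A k S w → NEBAux (graphOf A) k S w
  | 0, _, _, _, _, hD => hD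
  | k + 1, _, _, hw, hS, hD => hD.imp id fun ⟨hint, hrec⟩ =>
    ⟨card_filter_odd_comp_eq hA hT hw hS hint, fun v hv hadj =>
      nebAux_of_duarteAux hA hT k (self_mem_comp hv) comp_comp_self (hrec v hv hadj)⟩

end DuarteNEB

theorem stmt_12_general {N : ℕ} (T : SimpleGraph (Fin N)) (hT : T.IsTree)
    (v : Fin N) (hNEB : ¬ NEB T v)
    (A : Matrix (Fin N) (Fin N) ℝ) (hskew : Aᵀ = -A)
    (hgraph : ∀ i j, i ≠ j → (A i j ≠ 0 ↔ T.Adj i j)) :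
    ¬ Duarte A v := by
  obtain rfl := graphOf_eq_of_forall_ne_zero_iff hgraph
  have huniv : comp (graphOf A) univ v = univ :=
    eq_univ_of_forall fun u =>
      mem_comp.2 ⟨mem_univ u, (hT.connected v u).some, fun x _ => mem_univ x⟩
  exact fun hD => hNEB (nebAux_of_duarteAux hskew hT N (mem_univ v) huniv hD)

/-- If a tree `T` of order `n ≥ 3` is not NEB at a vertex `v`, then no real
skew-symmetric matrix with graph `T` has the Duarte property with respect
to `v`. -/
theorem stmt_12 {N : ℕ} (hN : 3 ≤ N) (T : SimpleGraph (Fin N)) (hT : T.IsTree)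
    (v : Fin N) (hNEB : ¬ NEB T v)
    (A : Matrix (Fin N) (Fin N) ℝ) (hskew : Aᵀ = -A)
    (hgraph : ∀ i j, i ≠ j → (A i j ≠ 0 ↔ T.Adj i j)) :
    ¬ Duarte A v :=
  stmt_12_general T hT v hNEB A hskew hgraph
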